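/- arXiv:1807.03761 — 6 statements merged into one kernel-verified Lean document; each statement's English description precedes it below -/
import Mathlib

section
/- The map (A, B, x₀, y₀) ↦ (c, d, e) := (−x₀, y₀, −4A − 3x₀²) is a bijection from the set {(A, B, x₀, y₀) ∈ ℤ⁴ : Δ_{A,B} ≠ 0 and y₀² = x₀³ + Ax₀ + B} (integral affine Weierstrass models of elliptic curves together with an integral point) onto the set {(c, d, e) ∈ ℤ³ : e ≡ c² (mod 4) and Δ(X⁴ + 6cX²Y² + 8dXY³ + eY⁴) ≠ 0}. Its inverse is (c, d, e) ↦ (A, B, x₀, y₀) = ((−3c² − e)/4, (c³ + 4d² − ce)/4, −c, d), these quotients being integers whenever e ≡ c² (mod 4). -/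
/-- The invariant `I` of a binary quartic form `aX⁴ + bX³Y + cX²Y² + dXY³ + eY⁴`. -/
def quarticI (a b c d e : ℚ) : ℚ := 12 * a * e - 3 * b * d + c ^ 2

/-- The invariant `J` of a binary quartic form `aX⁴ + bX³Y + cX²Y² + dXY³ + eY⁴`. -/
def quarticJ (a b c d e : ℚ) : ℚ :=
  72 * a * c * e - 27 * a * d ^ 2 - 27 * b ^ 2 * e + 9 * b * c * d - 2 * c ^ 3

/-- The discriminant `Δ = (4I³ − J²)/27` of a binary quartic form. -/
def quarticDisc (a b c d e : ℚ) : ℚ :=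
  (4 * quarticI a b c d e ^ 3 - quarticJ a b c d e ^ 2) / 27

/-- Integral affine Weierstrass models `y² = x³ + Ax + B` with `Δ_{A,B} ≠ 0`, together
with an integral point `(x₀, y₀)`; encoded as quadruples `(A, B, x₀, y₀)`. -/
def modelsWithPoint : Set (ℤ × ℤ × ℤ × ℤ) :=
  {q | -16 * (4 * q.1 ^ 3 + 27 * q.2.1 ^ 2) ≠ 0 ∧
    q.2.2.2 ^ 2 = q.2.2.1 ^ 3 + q.1 * q.2.2.1 + q.2.1}

/-- Triples `(c, d, e) ∈ ℤ³` with `e ≡ c² (mod 4)` and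
`Δ(X⁴ + 6cX²Y² + 8dXY³ + eY⁴) ≠ 0`. -/
def quarticTriples : Set (ℤ × ℤ × ℤ) :=
  {t | t.2.2 ≡ t.1 ^ 2 [ZMOD 4] ∧
    quarticDisc 1 0 (6 * (t.1 : ℚ)) (8 * (t.2.1 : ℚ)) (t.2.2 : ℚ) ≠ 0}

/-- The forward map `(A, B, x₀, y₀) ↦ (c, d, e) = (−x₀, y₀, −4A − 3x₀²)`. -/
def toQuartic (q : ℤ × ℤ × ℤ × ℤ) : ℤ × ℤ × ℤ :=
  (-q.2.2.1, q.2.2.2, -4 * q.1 - 3 * q.2.2.1 ^ 2)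

/-- The inverse map `(c, d, e) ↦ ((−3c² − e)/4, (c³ + 4d² − ce)/4, −c, d)`. -/
def toModel (t : ℤ × ℤ × ℤ) : ℤ × ℤ × ℤ × ℤ :=
  ((-3 * t.1 ^ 2 - t.2.2) / 4, (t.1 ^ 3 + 4 * t.2.1 ^ 2 - t.1 * t.2.2) / 4, -t.1, t.2.1)

lemma dvd1 (c e : ℤ) (h : e ≡ c ^ 2 [ZMOD 4]) : (4 : ℤ) ∣ (-3 * c ^ 2 - e) := by
  obtain ⟨k, hk⟩ := (Int.modEq_iff_dvd.mp h)
  exact ⟨-c ^ 2 + k, by linarith⟩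

lemma dvd2 (c d e : ℤ) (h : e ≡ c ^ 2 [ZMOD 4]) :
    (4 : ℤ) ∣ (c ^ 3 + 4 * d ^ 2 - c * e) := by
  obtain ⟨k, hk⟩ := (Int.modEq_iff_dvd.mp h)
  exact ⟨c * k + d ^ 2, by linear_combination c * hk⟩

lemma discF (A B x y : ℚ) (h : y ^ 2 = x ^ 3 + A * x + B) :
    quarticDisc 1 0 (6 * (-x)) (8 * y) (-4 * A - 3 * x ^ 2) =
      256 * (-16 * (4 * A ^ 3 + 27 * B ^ 2)) := by
  have hB : B = y ^ 2 - x ^ 3 - A * x := by linarith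
  subst hB
  unfold quarticDisc quarticI quarticJ
  ring

lemma discR (a b c d e : ℚ) (hA : 4 * a = -3 * c ^ 2 - e)
    (hB : 4 * b = c ^ 3 + 4 * d ^ 2 - c * e) :
    quarticDisc 1 0 (6 * c) (8 * d) e = 256 * (-16 * (4 * a ^ 3 + 27 * b ^ 2)) := by
  have ha : a = (-3 * c ^ 2 - e) / 4 := by linarith
  have hb : b = (c ^ 3 + 4 * d ^ 2 - c * e) / 4 := by linarith
  subst ha hb
  unfold quarticDisc quarticI quarticJ
  ring

/-- Mordell's bijection: `(A, B, x₀, y₀) ↦ (−x₀, y₀, −4A − 3x₀²)` is a bijection from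
integral Weierstrass models with an integral point onto triples `(c, d, e)` with
`e ≡ c² (mod 4)` and `Δ(X⁴ + 6cX²Y² + 8dXY³ + eY⁴) ≠ 0`; the displayed quotients in the
inverse map are integers, and the stated map is a two-sided inverse on these sets. -/
theorem mordell_bijection :
    Set.BijOn toQuartic modelsWithPoint quarticTriples ∧
    (∀ c d e : ℤ, e ≡ c ^ 2 [ZMOD 4] →
      (4 : ℤ) ∣ (-3 * c ^ 2 - e) ∧ (4 : ℤ) ∣ (c ^ 3 + 4 * d ^ 2 - c * e)) ∧
    Set.InvOn toModel toQuartic modelsWithPoint quarticTriples := by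
  have hmapsF : Set.MapsTo toQuartic modelsWithPoint quarticTriples := by
    rintro ⟨A, B, x, y⟩ ⟨hΔ, hy⟩
    constructor
    · exact Int.modEq_iff_dvd.mpr ⟨A + x ^ 2, by simp only [toQuartic]; ring⟩
    · show quarticDisc 1 0 (6 * ((-x : ℤ) : ℚ)) (8 * ((y : ℤ) : ℚ))
        ((-4 * A - 3 * x ^ 2 : ℤ) : ℚ) ≠ 0
      have hq : ((y : ℚ)) ^ 2 = (x : ℚ) ^ 3 + (A : ℚ) * x + B := by exact_mod_cast hy
      have := discF (A : ℚ) (B : ℚ) (x : ℚ) (y : ℚ) hq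
      push_cast
      rw [this]
      have hΔ' : ((-16 * (4 * A ^ 3 + 27 * B ^ 2) : ℤ) : ℚ) ≠ 0 :=
        Int.cast_ne_zero.mpr hΔ
      push_cast at hΔ'
      intro h0
      apply hΔ'
      linarith [h0]
  have hmapsR : Set.MapsTo toModel quarticTriples modelsWithPoint := by
    rintro ⟨c, d, e⟩ ⟨h1, h2⟩
    have hA4 : 4 * ((-3 * c ^ 2 - e) / 4) = -3 * c ^ 2 - e :=
      Int.mul_ediv_cancel' (dvd1 c e h1)
    have hB4 : 4 * ((c ^ 3 + 4 * d ^ 2 - c * e) / 4) = c ^ 3 + 4 * d ^ 2 - c * e :=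
      Int.mul_ediv_cancel' (dvd2 c d e h1)
    set A := (-3 * c ^ 2 - e) / 4 with hA
    set B := (c ^ 3 + 4 * d ^ 2 - c * e) / 4 with hB
    constructor
    · show -16 * (4 * A ^ 3 + 27 * B ^ 2) ≠ 0
      intro h0
      apply h2
      have hAq : 4 * (A : ℚ) = -3 * (c : ℚ) ^ 2 - e := by exact_mod_cast hA4
      have hBq : 4 * (B : ℚ) = (c : ℚ) ^ 3 + 4 * d ^ 2 - c * e := by exact_mod_cast hB4
      have := discR (A : ℚ) (B : ℚ) (c : ℚ) (d : ℚ) (e : ℚ) hAq hBq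
      have h0q : (-16 * (4 * (A : ℚ) ^ 3 + 27 * (B : ℚ) ^ 2)) = 0 := by exact_mod_cast h0
      rw [this, h0q, mul_zero]
    · show d ^ 2 = (-c) ^ 3 + A * (-c) + B
      have h4 : (4 : ℤ) * d ^ 2 = 4 * ((-c) ^ 3 + A * (-c) + B) := by
        linear_combination c * hA4 - hB4
      omega
  have hinv : Set.InvOn toModel toQuartic modelsWithPoint quarticTriples := by
    constructor
    · rintro ⟨A, B, x, y⟩ ⟨hΔ, hy⟩
      show ((-3 * (-x) ^ 2 - (-4 * A - 3 * x ^ 2)) / 4,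
        ((-x) ^ 3 + 4 * y ^ 2 - (-x) * (-4 * A - 3 * x ^ 2)) / 4, -(-x), y) = (A, B, x, y)
      have e1 : -3 * (-x) ^ 2 - (-4 * A - 3 * x ^ 2) = 4 * A := by ring
      have e2 : (-x) ^ 3 + 4 * y ^ 2 - (-x) * (-4 * A - 3 * x ^ 2) = 4 * B := by
        linear_combination 4 * hy
      rw [e1, e2, Int.mul_ediv_cancel_left A (by norm_num),
        Int.mul_ediv_cancel_left B (by norm_num), neg_neg]
    · rintro ⟨c, d, e⟩ ⟨h1, h2⟩
      have hA4 : 4 * ((-3 * c ^ 2 - e) / 4) = -3 * c ^ 2 - e :=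
        Int.mul_ediv_cancel' (dvd1 c e h1)
      show (-(-c), d, -4 * ((-3 * c ^ 2 - e) / 4) - 3 * (-c) ^ 2) = (c, d, e)
      have : -4 * ((-3 * c ^ 2 - e) / 4) - 3 * (-c) ^ 2 = e := by linarith
      rw [this, neg_neg]
  exact ⟨hinv.bijOn hmapsF hmapsR, fun c d e h => ⟨dvd1 c e h, dvd2 c d e h⟩, hinv⟩
end

section
/- Let S be the set of pairs (f, (p,q)) where f is an integer-matrix binary quartic form over ℤ and (p,q) ∈ ℤ² with f(p,q) = 1. Declare (f, (p,q)) ∼ (f′, (p′,q′)) if there exists g ∈ SL₂(ℤ) with f′(X,Y) = f((X,Y)·g) and (p,q) = (p′,q′)·g; this is an equivalence relation on S. Then the map sending (c,d,e) ∈ ℤ³ to the equivalence class of (X⁴ + 6cX²Y² + 4dXY³ + eY⁴, (1,0)) is a bijection from ℤ³ onto S/∼. Furthermore, this map restricts to a bijection from {(c,d,e) ∈ ℤ³ : 2 ∣ d and e ≡ c² (mod 4)} onto the set of classes of pairs (f,(p,q)) ∈ S with 48 ∣ I(f) and 1728 ∣ J(f). -/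
/-- A binary quartic form `aX⁴ + bX³Y + cX²Y² + dXY³ + eY⁴` over `ℤ`, encoded by its
coefficient tuple `(a, b, c, d, e)`. -/
abbrev BQ : Type := ℤ × ℤ × ℤ × ℤ × ℤ

/-- Evaluation of a binary quartic form at `(x, y)`. -/
def evalBQ (f : BQ) (x y : ℤ) : ℤ :=
  f.1 * x ^ 4 + f.2.1 * x ^ 3 * y + f.2.2.1 * x ^ 2 * y ^ 2 +
    f.2.2.2.1 * x * y ^ 3 + f.2.2.2.2 * y ^ 4

/-- A binary quartic form over `ℤ` is integer-matrix if `4 ∣ b`, `6 ∣ c` and `4 ∣ d`. -/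
def IsIntegerMatrixBQ (f : BQ) : Prop :=
  4 ∣ f.2.1 ∧ 6 ∣ f.2.2.1 ∧ 4 ∣ f.2.2.2.1

/-- The invariant `I = 12ae − 3bd + c²` of a binary quartic form over `ℤ`. -/
def IBQ (f : BQ) : ℤ :=
  12 * f.1 * f.2.2.2.2 - 3 * f.2.1 * f.2.2.2.1 + f.2.2.1 ^ 2

/-- The invariant `J = 72ace − 27ad² − 27b²e + 9bcd − 2c³` of a binary quartic over `ℤ`. -/
def JBQ (f : BQ) : ℤ :=
  72 * f.1 * f.2.2.1 * f.2.2.2.2 - 27 * f.1 * f.2.2.2.1 ^ 2 - 27 * f.2.1 ^ 2 * f.2.2.2.2 +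
    9 * f.2.1 * f.2.2.1 * f.2.2.2.1 - 2 * f.2.2.1 ^ 3

/-- The set `S` of pairs `(f, (p,q))` with `f` an integer-matrix binary quartic form and
`f(p,q) = 1`. -/
def Spairs : Set (BQ × (ℤ × ℤ)) :=
  {x | IsIntegerMatrixBQ x.1 ∧ evalBQ x.1 x.2.1 x.2.2 = 1}

/-- `(f,(p,q)) ∼ (f′,(p′,q′))` iff there is `g = (α β; γ δ) ∈ SL₂(ℤ)` with
`f′(X,Y) = f((X,Y)·g) = f(αX + γY, βX + δY)` and `(p,q) = (p′,q′)·g`. -/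
def relBQ (x x' : BQ × (ℤ × ℤ)) : Prop :=
  ∃ g : Matrix (Fin 2) (Fin 2) ℤ, g.det = 1 ∧
    (∀ X Y : ℤ, evalBQ x'.1 X Y = evalBQ x.1 (g 0 0 * X + g 1 0 * Y) (g 0 1 * X + g 1 1 * Y)) ∧
    x.2.1 = g 0 0 * x'.2.1 + g 1 0 * x'.2.2 ∧
    x.2.2 = g 0 1 * x'.2.1 + g 1 1 * x'.2.2

/-- The map `(c,d,e) ↦ (X⁴ + 6cX²Y² + 4dXY³ + eY⁴, (1,0))`. -/
def PhiBQ (t : ℤ × ℤ × ℤ) : BQ × (ℤ × ℤ) :=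
  ((1, 0, 6 * t.1, 4 * t.2.1, t.2.2), (1, 0))

/-!
Since `f(p,q) = 1`, the vector `(p,q)` is primitive and is the first row of some
`g ∈ SL₂(ℤ)`; then `f((X,Y)·g)` has leading coefficient `f(p,q) = 1`. Adding `k` times the first
row of `g` to the second changes the `X³Y`-coefficient by `4k·f(p,q) = 4k` (Euler's identity), and
for integer-matrix forms that coefficient is divisible by `4`, so it can be made `0`: every class
contains some `(X⁴ + 6cX²Y² + 4dXY³ + eY⁴, (1,0))`. Matrices fixing `(1,0)` are `(1 0; γ 1)`,
and these change the `X³Y`-coefficient of such a form by `4γ`, whence uniqueness. Finally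
`I = 12e + 36c²` and `J = 432(ce − d² − c³)` for these forms, and `I`, `J` are `SL₂(ℤ)`-invariant.
-/

/-- The coefficients of `f(αX + γY, βX + δY)`, i.e. of `f((X,Y)·g)` for `g = (α β; γ δ)`. -/
def substBQ (f : BQ) (α β γ δ : ℤ) : BQ :=
  (evalBQ f α β,
   4 * f.1 * α ^ 3 * γ + f.2.1 * (3 * α ^ 2 * β * γ + α ^ 3 * δ)
      + 2 * f.2.2.1 * (α * β ^ 2 * γ + α ^ 2 * β * δ) + f.2.2.2.1 * (β ^ 3 * γ + 3 * α * β ^ 2 * δ)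
      + 4 * f.2.2.2.2 * β ^ 3 * δ,
   6 * f.1 * α ^ 2 * γ ^ 2 + 3 * f.2.1 * (α ^ 2 * γ * δ + α * β * γ ^ 2)
      + f.2.2.1 * (α ^ 2 * δ ^ 2 + 4 * α * β * γ * δ + β ^ 2 * γ ^ 2)
      + 3 * f.2.2.2.1 * (α * β * δ ^ 2 + β ^ 2 * γ * δ) + 6 * f.2.2.2.2 * β ^ 2 * δ ^ 2,
   4 * f.1 * α * γ ^ 3 + f.2.1 * (β * γ ^ 3 + 3 * α * γ ^ 2 * δ)
      + 2 * f.2.2.1 * (α * γ * δ ^ 2 + β * γ ^ 2 * δ) + f.2.2.2.1 * (α * δ ^ 3 + 3 * β * γ * δ ^ 2)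
      + 4 * f.2.2.2.2 * β * δ ^ 3,
   evalBQ f γ δ)

lemma evalBQ_substBQ (f : BQ) (α β γ δ X Y : ℤ) :
    evalBQ (substBQ f α β γ δ) X Y = evalBQ f (α * X + γ * Y) (β * X + δ * Y) := by
  simp only [substBQ, evalBQ]
  ring

lemma substBQ_one_zero_zero_one (f : BQ) : substBQ f 1 0 0 1 = f := by
  simp only [substBQ, evalBQ]
  ext <;> simp

lemma IBQ_substBQ (f : BQ) (α β γ δ : ℤ) :
    IBQ (substBQ f α β γ δ) = (α * δ - β * γ) ^ 4 * IBQ f := by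
  simp only [substBQ, IBQ, evalBQ]
  ring

lemma JBQ_substBQ (f : BQ) (α β γ δ : ℤ) :
    JBQ (substBQ f α β γ δ) = (α * δ - β * γ) ^ 6 * JBQ f := by
  simp only [substBQ, JBQ, evalBQ]
  ring

/-- Euler's identity `X ∂f/∂X + Y ∂f/∂Y = 4f`, read off the `X³Y`-coefficient. -/
lemma substBQ_snd_fst_shear (f : BQ) (α β γ δ k : ℤ) :
    (substBQ f α β (γ + k * α) (δ + k * β)).2.1
      = (substBQ f α β γ δ).2.1 + 4 * k * evalBQ f α β := by
  simp only [substBQ, evalBQ]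
  ring

lemma IsIntegerMatrixBQ.substBQ {f : BQ} (hf : IsIntegerMatrixBQ f) (α β γ δ : ℤ) :
    IsIntegerMatrixBQ (substBQ f α β γ δ) := by
  obtain ⟨a, b', c', d', e⟩ := f
  obtain ⟨⟨b, rfl : b' = 4 * b⟩, ⟨c, rfl : c' = 6 * c⟩, ⟨d, rfl : d' = 4 * d⟩⟩ := hf
  refine ⟨⟨a * α ^ 3 * γ + b * (3 * α ^ 2 * β * γ + α ^ 3 * δ)
      + 3 * c * (α * β ^ 2 * γ + α ^ 2 * β * δ) + d * (β ^ 3 * γ + 3 * α * β ^ 2 * δ)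
      + e * β ^ 3 * δ, ?_⟩,
    ⟨a * α ^ 2 * γ ^ 2 + 2 * b * (α ^ 2 * γ * δ + α * β * γ ^ 2)
      + c * (α ^ 2 * δ ^ 2 + 4 * α * β * γ * δ + β ^ 2 * γ ^ 2)
      + 2 * d * (α * β * δ ^ 2 + β ^ 2 * γ * δ) + e * β ^ 2 * δ ^ 2, ?_⟩,
    ⟨a * α * γ ^ 3 + b * (β * γ ^ 3 + 3 * α * γ ^ 2 * δ)
      + 3 * c * (α * γ * δ ^ 2 + β * γ ^ 2 * δ) + d * (α * δ ^ 3 + 3 * β * γ * δ ^ 2)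
      + e * β * δ ^ 3, ?_⟩⟩ <;>
  · simp only [_root_.substBQ]
    ring

lemma evalBQ_injective : Function.Injective evalBQ := by
  rintro ⟨a, b, c, d, e⟩ ⟨a', b', c', d', e'⟩ h
  have h10 := congrFun (congrFun h 1) 0
  have h01 := congrFun (congrFun h 0) 1
  have h11 := congrFun (congrFun h 1) 1
  have h1m := congrFun (congrFun h 1) (-1)
  have h12 := congrFun (congrFun h 1) 2
  simp only [evalBQ] at h10 h01 h11 h1m h12
  simp only [Prod.mk.injEq]
  omega

lemma relBQ_iff_substBQ {x x' : BQ × (ℤ × ℤ)} :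
    relBQ x x' ↔ ∃ g : Matrix (Fin 2) (Fin 2) ℤ, g.det = 1 ∧
      x'.1 = substBQ x.1 (g 0 0) (g 0 1) (g 1 0) (g 1 1) ∧
      x.2.1 = g 0 0 * x'.2.1 + g 1 0 * x'.2.2 ∧ x.2.2 = g 0 1 * x'.2.1 + g 1 1 * x'.2.2 := by
  have hsubst (f f' : BQ) (α β γ δ : ℤ) : f' = substBQ f α β γ δ ↔
      ∀ X Y, evalBQ f' X Y = evalBQ f (α * X + γ * Y) (β * X + δ * Y) := by
    simp only [← evalBQ_substBQ, ← funext_iff, evalBQ_injective.eq_iff]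
  simp only [relBQ, hsubst]

open Matrix

lemma relBQ_iff_vecMul {x x' : BQ × (ℤ × ℤ)} :
    relBQ x x' ↔ ∃ g : Matrix (Fin 2) (Fin 2) ℤ, g.det = 1 ∧
      (∀ v : Fin 2 → ℤ, evalBQ x'.1 (v 0) (v 1) = evalBQ x.1 ((v ᵥ* g) 0) ((v ᵥ* g) 1)) ∧
      ![x.2.1, x.2.2] = ![x'.2.1, x'.2.2] ᵥ* g := by
  have hv (g : Matrix (Fin 2) (Fin 2) ℤ) (v : Fin 2 → ℤ) :
      v ᵥ* g = ![g 0 0 * v 0 + g 1 0 * v 1, g 0 1 * v 0 + g 1 1 * v 1] := by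
    ext i; fin_cases i <;> simp [vecMul, dotProduct, Fin.sum_univ_two] <;> ring
  simp [relBQ, hv, funext_iff, Fin.forall_fin_two, Fin.forall_fin_succ_pi]

lemma relBQ_refl (x : BQ × (ℤ × ℤ)) : relBQ x x :=
  relBQ_iff_vecMul.2 ⟨1, det_one, fun v => by rw [vecMul_one], by rw [vecMul_one]⟩

lemma relBQ_symm {x y : BQ × (ℤ × ℤ)} (h : relBQ x y) : relBQ y x := by
  obtain ⟨g, hdet, hev, hpt⟩ := relBQ_iff_vecMul.1 h
  have hinv : adjugate g * g = 1 := by rw [adjugate_mul, hdet, one_smul]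
  have hinv' : g * adjugate g = 1 := by rw [mul_adjugate, hdet, one_smul]
  refine relBQ_iff_vecMul.2 ⟨adjugate g, by rw [det_adjugate, hdet, one_pow], fun v => ?_, ?_⟩
  · rw [hev, vecMul_vecMul, hinv, vecMul_one]
  · rw [hpt, vecMul_vecMul, hinv', vecMul_one]

lemma relBQ_trans {x y z : BQ × (ℤ × ℤ)} (hxy : relBQ x y) (hyz : relBQ y z) : relBQ x z := by
  obtain ⟨g, hg, hevg, hptg⟩ := relBQ_iff_vecMul.1 hxy
  obtain ⟨h, hh, hevh, hpth⟩ := relBQ_iff_vecMul.1 hyz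
  refine relBQ_iff_vecMul.2 ⟨h * g, by rw [det_mul, hh, hg, one_mul], fun v => ?_, ?_⟩
  · rw [hevh, hevg, vecMul_vecMul]
  · rw [hptg, hpth, vecMul_vecMul]

lemma IBQ_eq_of_relBQ {x x' : BQ × (ℤ × ℤ)} (h : relBQ x x') : IBQ x'.1 = IBQ x.1 := by
  obtain ⟨g, hdet, hsub, -⟩ := relBQ_iff_substBQ.1 h
  rw [hsub, IBQ_substBQ, ← det_fin_two, hdet, one_pow, one_mul]

lemma JBQ_eq_of_relBQ {x x' : BQ × (ℤ × ℤ)} (h : relBQ x x') : JBQ x'.1 = JBQ x.1 := by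
  obtain ⟨g, hdet, hsub, -⟩ := relBQ_iff_substBQ.1 h
  rw [hsub, JBQ_substBQ, ← det_fin_two, hdet, one_pow, one_mul]

lemma isCoprime_of_evalBQ_eq_one {f : BQ} {p q : ℤ} (h : evalBQ f p q = 1) : IsCoprime p q :=
  ⟨f.1 * p ^ 3 + f.2.1 * p ^ 2 * q + f.2.2.1 * p * q ^ 2 + f.2.2.2.1 * q ^ 3,
    f.2.2.2.2 * q ^ 3, by rw [← h, evalBQ]; ring⟩

lemma exists_substBQ_eq_PhiBQ {f : BQ} {p q : ℤ} (hf : IsIntegerMatrixBQ f)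
    (h : evalBQ f p q = 1) :
    ∃ r s : ℤ, ∃ t : ℤ × ℤ × ℤ, p * s - q * r = 1 ∧ substBQ f p q r s = (PhiBQ t).1 := by
  obtain ⟨u, v, huv⟩ := isCoprime_of_evalBQ_eq_one h
  obtain ⟨k, hk⟩ := (hf.substBQ p q (-v) u).1
  obtain ⟨-, ⟨c, hc⟩, ⟨d, hd⟩⟩ := hf.substBQ p q (-v + -k * p) (u + -k * q)
  have hb : (substBQ f p q (-v + -k * p) (u + -k * q)).2.1 = 0 := by
    rw [substBQ_snd_fst_shear, hk, h]
    ring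
  exact ⟨-v + -k * p, u + -k * q, (c, d, (substBQ f p q (-v + -k * p) (u + -k * q)).2.2.2.2),
    by linear_combination huv, Prod.ext h (Prod.ext hb (Prod.ext hc (Prod.ext hd rfl)))⟩

lemma PhiBQ_mem_Spairs (t : ℤ × ℤ × ℤ) : PhiBQ t ∈ Spairs :=
  ⟨⟨dvd_zero 4, dvd_mul_right 6 _, dvd_mul_right 4 _⟩, by simp [PhiBQ, evalBQ]⟩

lemma exists_relBQ_PhiBQ {x : BQ × (ℤ × ℤ)} (hx : x ∈ Spairs) : ∃ t, relBQ x (PhiBQ t) := by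
  obtain ⟨r, s, t, hdet, ht⟩ := exists_substBQ_eq_PhiBQ hx.1 hx.2
  refine ⟨t, relBQ_iff_substBQ.2 ⟨!![x.2.1, x.2.2; r, s], ?_, ht.symm, ?_, ?_⟩⟩ <;>
    simp [det_fin_two, hdet, PhiBQ]

lemma eq_of_relBQ_PhiBQ {t t' : ℤ × ℤ × ℤ} (h : relBQ (PhiBQ t) (PhiBQ t')) : t = t' := by
  obtain ⟨g, hdet, hsub, hp, hq⟩ := relBQ_iff_substBQ.1 h
  simp only [PhiBQ, mul_one, mul_zero, add_zero] at hp hq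
  rw [det_fin_two, ← hp, ← hq, one_mul, zero_mul, sub_zero] at hdet
  rw [← hp, ← hq, hdet] at hsub
  have hγ : g 1 0 = 0 := by
    have hb := congrArg (fun f : BQ => f.2.1) hsub
    simp only [PhiBQ, substBQ] at hb
    linarith
  rw [hγ, substBQ_one_zero_zero_one] at hsub
  simp only [PhiBQ, Prod.mk.injEq] at hsub
  ext <;> omega

lemma IBQ_PhiBQ (t : ℤ × ℤ × ℤ) : IBQ (PhiBQ t).1 = 12 * t.2.2 + 36 * t.1 ^ 2 := by
  simp only [IBQ, PhiBQ]
  ring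

lemma JBQ_PhiBQ (t : ℤ × ℤ × ℤ) :
    JBQ (PhiBQ t).1 = 432 * (t.1 * t.2.2 - t.2.1 ^ 2 - t.1 ^ 3) := by
  simp only [JBQ, PhiBQ]
  ring

lemma dvd_IBQ_PhiBQ_and_dvd_JBQ_PhiBQ_iff (t : ℤ × ℤ × ℤ) :
    48 ∣ IBQ (PhiBQ t).1 ∧ 1728 ∣ JBQ (PhiBQ t).1 ↔ 2 ∣ t.2.1 ∧ t.2.2 ≡ t.1 ^ 2 [ZMOD 4] := by
  obtain ⟨c, d, e⟩ := t
  have hI : 48 ∣ 12 * e + 36 * c ^ 2 ↔ 4 ∣ e - c ^ 2 := by omega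
  have hd : 2 ∣ d ↔ 2 ^ 2 ∣ d ^ 2 := (Int.pow_dvd_pow_iff two_ne_zero).symm
  rw [IBQ_PhiBQ, JBQ_PhiBQ, Int.modEq_comm, Int.modEq_iff_dvd]
  dsimp only
  rw [hI, hd, and_comm (a := 2 ^ 2 ∣ d ^ 2)]
  refine and_congr_right fun ⟨m, hm⟩ => ?_
  have hJ : c * e - d ^ 2 - c ^ 3 = 4 * (c * m) - d ^ 2 := by linear_combination c * hm
  rw [hJ]
  omega

/-- `∼` is an equivalence relation on `S`, and `(c,d,e) ↦ [(X⁴ + 6cX²Y² + 4dXY³ + eY⁴, (1,0))]`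
is a bijection from `ℤ³` onto `S/∼`; furthermore it restricts to a bijection from
`{(c,d,e) : 2 ∣ d, e ≡ c² (mod 4)}` onto the classes of pairs with `48 ∣ I(f)` and
`1728 ∣ J(f)`. -/
theorem bq_rep_one_bijection :
    Equivalence (fun a b : ↥Spairs => relBQ a.1 b.1) ∧
    (∀ t : ℤ × ℤ × ℤ, PhiBQ t ∈ Spairs) ∧
    (∀ t t' : ℤ × ℤ × ℤ, relBQ (PhiBQ t) (PhiBQ t') → t = t') ∧
    (∀ x ∈ Spairs, ∃ t : ℤ × ℤ × ℤ, relBQ x (PhiBQ t)) ∧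
    (∀ t : ℤ × ℤ × ℤ, 2 ∣ t.2.1 → t.2.2 ≡ t.1 ^ 2 [ZMOD 4] →
      48 ∣ IBQ (PhiBQ t).1 ∧ 1728 ∣ JBQ (PhiBQ t).1) ∧
    (∀ x ∈ Spairs, 48 ∣ IBQ x.1 → 1728 ∣ JBQ x.1 →
      ∃ t : ℤ × ℤ × ℤ, (2 ∣ t.2.1 ∧ t.2.2 ≡ t.1 ^ 2 [ZMOD 4]) ∧ relBQ x (PhiBQ t)) := by
  refine ⟨⟨fun x => relBQ_refl x.1, relBQ_symm, relBQ_trans⟩, PhiBQ_mem_Spairs,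
    fun _ _ => eq_of_relBQ_PhiBQ, fun _ => exists_relBQ_PhiBQ,
    fun t hd he => (dvd_IBQ_PhiBQ_and_dvd_JBQ_PhiBQ_iff t).2 ⟨hd, he⟩, fun x hx hI hJ => ?_⟩
  obtain ⟨t, ht⟩ := exists_relBQ_PhiBQ hx
  refine ⟨t, (dvd_IBQ_PhiBQ_and_dvd_JBQ_PhiBQ_iff t).1 ?_, ht⟩
  rw [IBQ_eq_of_relBQ ht, JBQ_eq_of_relBQ ht]
  exact ⟨hI, hJ⟩
end

section
/- Let f(X,Y) = X⁴ + a₂X²Y² + a₃XY³ + a₄Y⁴ be a flattened binary quartic form with a₂, a₃, a₄ ∈ ℤ. Let M = (a b; c d) and M′ = (a b; c′ d′) be integer matrices with the same first row, with det M = det M′ ≠ 0, with gcd(a,b,c,d) = 1 and gcd(a,b,c′,d′) = 1, and suppose that both M·f and M′·f are flattened. Then M = M′ (i.e., c = c′ and d = d′). -/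
/-- Evaluation over `ℚ` of the flattened binary quartic form
`X⁴ + a₂X²Y² + a₃XY³ + a₄Y⁴` with `a₂, a₃, a₄ ∈ ℤ`. -/
def flatEval (a₂ a₃ a₄ : ℤ) (x y : ℚ) : ℚ :=
  x ^ 4 + (a₂ : ℚ) * x ^ 2 * y ^ 2 + (a₃ : ℚ) * x * y ^ 3 + (a₄ : ℚ) * y ^ 4

/-- `M·f` is flattened, where `M = (a b; c d)` acts by
`(M·f)(X,Y) = (det M)⁻² · f(aX + cY, bX + dY)`. -/
def IsFlattenedTransform (a₂ a₃ a₄ a b c d : ℤ) : Prop :=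
  ∃ e₂ e₃ e₄ : ℤ, ∀ x y : ℚ,
    ((a * d - b * c : ℤ) : ℚ) ^ (-2 : ℤ) *
      flatEval a₂ a₃ a₄ ((a : ℚ) * x + (c : ℚ) * y) ((b : ℚ) * x + (d : ℚ) * y) =
    flatEval e₂ e₃ e₄ x y

/-- If `f = X⁴ + a₂X²Y² + a₃XY³ + a₄Y⁴` is flattened and `M = (a b; c d)`,
`M′ = (a b; c′ d′)` are primitive integer matrices with the same first row and the same
nonzero determinant, such that both `M·f` and `M′·f` are flattened, then `M = M′`. -/
theorem flattened_transform_unique (a₂ a₃ a₄ a b c d c' d' : ℤ)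
    (hdet : a * d - b * c ≠ 0)
    (hdet' : a * d' - b * c' = a * d - b * c)
    (hprim : Int.gcd (Int.gcd a b) (Int.gcd c d) = 1)
    (hprim' : Int.gcd (Int.gcd a b) (Int.gcd c' d') = 1)
    (hflat : IsFlattenedTransform a₂ a₃ a₄ a b c d)
    (hflat' : IsFlattenedTransform a₂ a₃ a₄ a b c' d') :
    c = c' ∧ d = d' := by
  obtain ⟨e₂, e₃, e₄, h⟩ := hflat
  obtain ⟨g₂, g₃, g₄, h'⟩ := hflat'
  rw [hdet'] at h'
  set Δ : ℚ := ((a * d - b * c : ℤ) : ℚ) with hΔdef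
  have hΔ0 : Δ ≠ 0 := Int.cast_ne_zero.mpr hdet
  have hΔ2 : Δ ^ 2 ≠ 0 := pow_ne_zero 2 hΔ0
  have hpow : Δ ^ (-2 : ℤ) = (Δ ^ 2)⁻¹ := by
    rw [zpow_neg, zpow_two, sq]
  have key : ∀ x y : ℚ, flatEval a₂ a₃ a₄ ((a : ℚ) * x + (c : ℚ) * y)
      ((b : ℚ) * x + (d : ℚ) * y) = Δ ^ 2 * flatEval e₂ e₃ e₄ x y := by
    intro x y
    have hx := h x y
    rwa [hpow, inv_mul_eq_iff_eq_mul₀ hΔ2] at hx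
  have key' : ∀ x y : ℚ, flatEval a₂ a₃ a₄ ((a : ℚ) * x + (c' : ℚ) * y)
      ((b : ℚ) * x + (d' : ℚ) * y) = Δ ^ 2 * flatEval g₂ g₃ g₄ x y := by
    intro x y
    have hx := h' x y
    rwa [hpow, inv_mul_eq_iff_eq_mul₀ hΔ2] at hx
  simp only [flatEval] at key key'
  have E0 := key 1 0
  have E1 := key 1 1
  have E2 := key (-1) 1
  have E3 := key 2 1
  have E4 := key (-2) 1
  have F1 := key' 1 1
  have F2 := key' (-1) 1
  have F3 := key' 2 1
  have F4 := key' (-2) 1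
  have hav : (a : ℚ) * d' - b * c' = a * d - b * c := by exact_mod_cast hdet'
  have hP : (c : ℚ) * (4 * a ^ 3 + 2 * a₂ * a * b ^ 2 + a₃ * b ^ 3)
      + d * (2 * a₂ * a ^ 2 * b + 3 * a₃ * a * b ^ 2 + 4 * a₄ * b ^ 3) = 0 := by
    linear_combination (E3 - E4 - 2 * E1 + 2 * E2) / 12
  have hP' : (c' : ℚ) * (4 * a ^ 3 + 2 * a₂ * a * b ^ 2 + a₃ * b ^ 3)
      + d' * (2 * a₂ * a ^ 2 * b + 3 * a₃ * a * b ^ 2 + 4 * a₄ * b ^ 3) = 0 := by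
    linear_combination (F3 - F4 - 2 * F1 + 2 * F2) / 12
  have hEuler : (a : ℚ) * (4 * a ^ 3 + 2 * a₂ * a * b ^ 2 + a₃ * b ^ 3)
      + b * (2 * a₂ * a ^ 2 * b + 3 * a₃ * a * b ^ 2 + 4 * a₄ * b ^ 3) = 4 * Δ ^ 2 := by
    linear_combination 4 * E0
  have hc : (c : ℚ) - c' = 0 := by
    have h4 : 4 * Δ ^ 2 * ((c : ℚ) - c') = 0 := by
      linear_combination (a : ℚ) * hP - (a : ℚ) * hP'
        + (2 * (a₂ : ℚ) * a ^ 2 * b + 3 * a₃ * a * b ^ 2 + 4 * a₄ * b ^ 3) * hav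
        - ((c : ℚ) - c') * hEuler
    have h40 : (4 : ℚ) * Δ ^ 2 ≠ 0 := by positivity
    exact (mul_eq_zero.mp h4).resolve_left h40
  have hd : (d : ℚ) - d' = 0 := by
    have h4 : 4 * Δ ^ 2 * ((d : ℚ) - d') = 0 := by
      linear_combination (b : ℚ) * hP - (b : ℚ) * hP'
        - (4 * (a : ℚ) ^ 3 + 2 * a₂ * a * b ^ 2 + a₃ * b ^ 3) * hav
        - ((d : ℚ) - d') * hEuler
    have h40 : (4 : ℚ) * Δ ^ 2 ≠ 0 := by positivity
    exact (mul_eq_zero.mp h4).resolve_left h40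
  constructor
  · exact_mod_cast sub_eq_zero.mp hc
  · exact_mod_cast sub_eq_zero.mp hd
end

section
/- Let m be a positive integer, let x ≥ 1 be a real number such that every prime divisor of m is at most x, and let y be a real number with 1 ≤ y ≤ m. Then there exists a positive divisor d of m with y ≤ d ≤ x·y. -/
/-!
Take the least divisor `d` of `m` with `y ≤ d`. If `d > 1`, write `d = p * e` with `p` prime;
then `e` is a smaller divisor of `m`, so `e < y` by minimality, and `d = p * e ≤ x * y`.
-/

theorem Nat.cast_le_mul_of_forall_dvd_lt {m d : ℕ} {x y : ℝ} (hx : 1 ≤ x) (hy : 1 ≤ y)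
    (hprimes : ∀ p : ℕ, p.Prime → p ∣ m → (p : ℝ) ≤ x) (hd : d ∣ m)
    (hmin : ∀ e < d, e ∣ m → (e : ℝ) < y) : (d : ℝ) ≤ x * y := by
  rcases Nat.lt_or_ge 1 d with hd1 | hd1
  · obtain ⟨p, hp, hpd⟩ := Nat.exists_prime_and_dvd hd1.ne'
    have hpe : d = p * (d / p) := (Nat.mul_div_cancel' hpd).symm
    have he : (↑(d / p) : ℝ) < y :=
      hmin _ (Nat.div_lt_self (by omega) hp.one_lt) ((Nat.div_dvd_of_dvd hpd).trans hd)
    have hp : (p : ℝ) ≤ x := hprimes p hp (hpd.trans hd)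
    rw [hpe, Nat.cast_mul]
    exact mul_le_mul hp he.le (Nat.cast_nonneg _) (by linarith)
  · calc (d : ℝ) ≤ 1 := by exact_mod_cast hd1
      _ ≤ x * y := one_le_mul_of_one_le_of_one_le hx hy

theorem divisor_in_interval_general (m : ℕ) (x y : ℝ) (hx : 1 ≤ x)
    (hprimes : ∀ p : ℕ, p.Prime → p ∣ m → (p : ℝ) ≤ x)
    (hy1 : 1 ≤ y) (hym : y ≤ (m : ℝ)) :
    ∃ d : ℕ, d ∣ m ∧ y ≤ (d : ℝ) ∧ (d : ℝ) ≤ x * y := by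
  have hex : ∃ d : ℕ, d ∣ m ∧ y ≤ (d : ℝ) := ⟨m, dvd_rfl, hym⟩
  obtain ⟨hdvd, hyd⟩ := Nat.find_spec hex
  refine ⟨Nat.find hex, hdvd, hyd, Nat.cast_le_mul_of_forall_dvd_lt hx hy1 hprimes hdvd ?_⟩
  intro e he hem
  exact not_le.mp fun hye => Nat.find_min hex he ⟨hem, hye⟩

/-- The greedy divisor lemma: if every prime divisor of the positive integer `m` is at
most `x` (where `x ≥ 1`), then for any real `y` with `1 ≤ y ≤ m` there is a positive
divisor `d` of `m` with `y ≤ d ≤ x·y`. -/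
theorem divisor_in_interval (m : ℕ) (hm : 0 < m) (x y : ℝ) (hx : 1 ≤ x)
    (hprimes : ∀ p : ℕ, p.Prime → p ∣ m → (p : ℝ) ≤ x)
    (hy1 : 1 ≤ y) (hym : y ≤ (m : ℝ)) :
    ∃ d : ℕ, d ∣ m ∧ y ≤ (d : ℝ) ∧ (d : ℝ) ≤ x * y :=
  divisor_in_interval_general m x y hx hprimes hy1 hym
end

section
/- For every integer n ≥ 1 and every real number δ with 0 < δ < 1: ∏_{p prime, p² ∣ n, p ≥ n^δ} (⌊v_p(n)/2⌋ + 1) ≤ (1/(2δ) + 1)^{1/(2δ)}. -/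
/-!
If primes `p₁, …, p_k ≥ n^δ` occur in `n` with exponents `e₁, …, e_k`, then
`n^{δ(e₁ + ⋯ + e_k)} ≤ ∏ pᵢ^{eᵢ} ≤ n`, so `e₁ + ⋯ + e_k ≤ 1/δ`. Taking a single prime bounds every
factor `⌊v_p(n)/2⌋ + 1` by `1/(2δ) + 1`; taking all exponents equal to `2` bounds the number of
factors by `1/(2δ)`.
-/

open Finset

theorem Real.mul_le_one_of_rpow_pow_le {x δ : ℝ} {k : ℕ} (hx : 1 < x) (h : (x ^ δ) ^ k ≤ x) :
    δ * k ≤ 1 := by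
  rw [← Real.rpow_natCast, ← Real.rpow_mul (by linarith)] at h
  exact (Real.rpow_le_rpow_left_iff hx).mp (h.trans_eq (Real.rpow_one x).symm)

theorem Finset.prod_le_rpow_of_card_le {ι : Type*} {s : Finset ι} {f : ι → ℝ} {B t : ℝ}
    (h0 : ∀ i ∈ s, 0 ≤ f i) (hf : ∀ i ∈ s, f i ≤ B) (hB : 1 ≤ B) (ht : (#s : ℝ) ≤ t) :
    ∏ i ∈ s, f i ≤ B ^ t :=
  calc ∏ i ∈ s, f i ≤ B ^ #s := (prod_le_prod h0 hf).trans_eq (prod_const B)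
    _ = B ^ ((#s : ℕ) : ℝ) := (Real.rpow_natCast B _).symm
    _ ≤ B ^ t := Real.rpow_le_rpow_of_exponent_le hB ht

namespace Nat

theorem prod_pow_dvd_of_forall_le_factorization {n : ℕ} {s : Finset ℕ} {e : ℕ → ℕ}
    (hs : s ⊆ n.primeFactors) (he : ∀ p ∈ s, e p ≤ n.factorization p) :
    ∏ p ∈ s, p ^ e p ∣ n := by
  rcases eq_or_ne n 0 with rfl | hn
  · exact dvd_zero _
  calc ∏ p ∈ s, p ^ e p ∣ ∏ p ∈ s, p ^ n.factorization p :=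
        prod_dvd_prod_of_dvd _ _ fun p hp => pow_dvd_pow p (he p hp)
    _ ∣ ∏ p ∈ n.primeFactors, p ^ n.factorization p := prod_dvd_prod_of_subset _ _ _ hs
    _ = n := (prod_primeFactors_pow_factorization hn).symm

theorem mul_sum_le_one_of_le_factorization {n : ℕ} {δ : ℝ} {s : Finset ℕ} {e : ℕ → ℕ}
    (hs : s ⊆ n.primeFactors) (he : ∀ p ∈ s, e p ≤ n.factorization p)
    (hlarge : ∀ p ∈ s, (n : ℝ) ^ δ ≤ p) :
    δ * ↑(∑ p ∈ s, e p) ≤ 1 := by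
  rcases s.eq_empty_or_nonempty with rfl | ⟨q, hq⟩
  · simp
  have hn : 1 < n :=
    (prime_of_mem_primeFactors (hs hq)).one_lt.trans_le (le_of_mem_primeFactors (hs hq))
  refine Real.mul_le_one_of_rpow_pow_le (x := n) (by exact_mod_cast hn) ?_
  calc ((n : ℝ) ^ δ) ^ (∑ p ∈ s, e p) = ∏ p ∈ s, ((n : ℝ) ^ δ) ^ e p :=
        (prod_pow_eq_pow_sum s e _).symm
    _ ≤ ∏ p ∈ s, (p : ℝ) ^ e p :=
        prod_le_prod (fun _ _ => by positivity)
          fun p hp => pow_le_pow_left₀ (by positivity) (hlarge p hp) _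
    _ ≤ n := by
        exact_mod_cast le_of_dvd (by omega) (prod_pow_dvd_of_forall_le_factorization hs he)

end Nat

open scoped Classical in
theorem large_prime_product_bound_general (n : ℕ) (δ : ℝ) (hδ0 : 0 < δ) :
    (∏ p ∈ Finset.filter (fun p : ℕ => p ^ 2 ∣ n ∧ (n : ℝ) ^ δ ≤ (p : ℝ)) n.primeFactors,
        ((n.factorization p / 2 + 1 : ℕ) : ℝ)) ≤
      (1 / (2 * δ) + 1) ^ (1 / (2 * δ)) := by
  set s := Finset.filter (fun p : ℕ => p ^ 2 ∣ n ∧ (n : ℝ) ^ δ ≤ (p : ℝ)) n.primeFactors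
  have hs : s ⊆ n.primeFactors := filter_subset _ _
  have hlarge : ∀ p ∈ s, (n : ℝ) ^ δ ≤ p := fun p hp => (mem_filter.mp hp).2.2
  have hfactor : ∀ p ∈ s, ((n.factorization p / 2 + 1 : ℕ) : ℝ) ≤ 1 / (2 * δ) + 1 := by
    intro p hp
    have hv := Nat.mul_sum_le_one_of_le_factorization (singleton_subset_iff.mpr (hs hp))
      (e := n.factorization) (by simp) (by simpa using hlarge p hp)
    rw [sum_singleton] at hv
    have hdiv : ((n.factorization p / 2 : ℕ) : ℝ) ≤ n.factorization p / 2 := Nat.cast_div_le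
    rw [Nat.cast_succ, add_le_add_iff_right, le_div_iff₀ (by positivity)]
    nlinarith
  have hcard : (#s : ℝ) ≤ 1 / (2 * δ) := by
    have hsquare : ∀ p ∈ s, 2 ≤ n.factorization p := fun p hp => by
      obtain ⟨hprime, -, hn⟩ := Nat.mem_primeFactors.mp (hs hp)
      exact (hprime.pow_dvd_iff_le_factorization hn).mp (mem_filter.mp hp).2.1
    have h := Nat.mul_sum_le_one_of_le_factorization hs hsquare hlarge
    rw [sum_const, smul_eq_mul, Nat.cast_mul, Nat.cast_two] at h
    rw [le_div_iff₀ (by positivity)]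
    linarith
  exact prod_le_rpow_of_card_le (fun _ _ => by positivity) hfactor
    (le_add_of_nonneg_left (by positivity)) hcard

open scoped Classical in
/-- For `n ≥ 1` and `0 < δ < 1`, the product of `⌊v_p(n)/2⌋ + 1` over primes `p` with
`p² ∣ n` and `p ≥ n^δ` is at most `(1/(2δ) + 1)^{1/(2δ)}`. -/
theorem large_prime_product_bound (n : ℕ) (hn : 1 ≤ n) (δ : ℝ) (hδ0 : 0 < δ)
    (hδ1 : δ < 1) :
    (∏ p ∈ Finset.filter (fun p : ℕ => p ^ 2 ∣ n ∧ (n : ℝ) ^ δ ≤ (p : ℝ)) n.primeFactors,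
        ((n.factorization p / 2 + 1 : ℕ) : ℝ)) ≤
      (1 / (2 * δ) + 1) ^ (1 / (2 * δ)) :=
  large_prime_product_bound_general n δ hδ0
end

section
/- Let T ≥ 1 be a real number, let δ be a real number with 0 < δ ≤ 1/18, and let n be a positive integer such that every prime divisor of n is at most T^δ and n ≤ T^{1/2}. Then there exists a positive divisor d of n such that d ≤ T^{1/6}, min(n, T^{1/6−δ}) ≤ d, and τ(n) ≤ τ(d)⁴. -/
private lemma tau_mul_le' (a b : ℕ) :
    (a * b).divisors.card ≤ a.divisors.card * b.divisors.card := by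
  rcases eq_or_ne a 0 with rfl | ha
  · simp
  rcases eq_or_ne b 0 with rfl | hb
  · simp
  calc (a * b).divisors.card
      ≤ ((a.divisors ×ˢ b.divisors).image fun p => p.1 * p.2).card := by
        apply Finset.card_le_card
        intro d hd
        rw [Nat.mem_divisors] at hd
        obtain ⟨y, z, hy, hz, hyz⟩ := Nat.dvd_mul.mp hd.1
        refine Finset.mem_image.mpr ⟨(y, z), ?_, hyz⟩
        exact Finset.mem_product.mpr
          ⟨Nat.mem_divisors.mpr ⟨hy, ha⟩, Nat.mem_divisors.mpr ⟨hz, hb⟩⟩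
    _ ≤ (a.divisors ×ˢ b.divisors).card := Finset.card_image_le
    _ = a.divisors.card * b.divisors.card := Finset.card_product _ _

/-- Greedy extension: any divisor `m ≤ T^{1/6}` of a smooth `n` extends to a divisor
`d ≤ T^{1/6}` which is either `n` or at least `T^{1/6-δ}`. -/
private lemma stepA (T : ℝ) (hT : 1 ≤ T) (δ : ℝ)
    (n : ℕ) (hn : 0 < n)
    (hsmooth : ∀ p : ℕ, p.Prime → p ∣ n → (p : ℝ) ≤ T ^ δ)
    (m : ℕ) (hm : m ∣ n) (hm6 : (m : ℝ) ≤ T ^ ((1:ℝ)/6)) :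
    ∃ d : ℕ, m ∣ d ∧ d ∣ n ∧ (d : ℝ) ≤ T ^ ((1:ℝ)/6) ∧
      (d = n ∨ T ^ ((1:ℝ)/6 - δ) ≤ (d : ℝ)) := by
  have hT0 : (0:ℝ) < T := lt_of_lt_of_le one_pos hT
  classical
  set S : Finset ℕ := n.divisors.filter (fun d => m ∣ d ∧ (d : ℝ) ≤ T ^ ((1:ℝ)/6)) with hS
  have hmS : m ∈ S := by
    rw [hS, Finset.mem_filter, Nat.mem_divisors]
    exact ⟨⟨hm, hn.ne'⟩, dvd_rfl, hm6⟩
  have hSne : S.Nonempty := ⟨m, hmS⟩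
  set d := S.max' hSne with hd
  have hdS : d ∈ S := S.max'_mem hSne
  rw [hS, Finset.mem_filter, Nat.mem_divisors] at hdS
  obtain ⟨⟨hdn, -⟩, hmd, hd6⟩ := hdS
  refine ⟨d, hmd, hdn, hd6, ?_⟩
  rcases eq_or_ne d n with heq | hdne
  · exact Or.inl heq
  right
  have hd0 : 0 < d := Nat.pos_of_dvd_of_pos hdn hn
  obtain ⟨k, hk⟩ := hdn
  have hk1 : k ≠ 1 := by
    rintro rfl; exact hdne (by simpa using hk.symm)
  have hk0 : k ≠ 0 := by
    rintro rfl; rw [hk] at hn; simp at hn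
  set p := k.minFac with hp
  have hpp : p.Prime := Nat.minFac_prime hk1
  have hpk : p ∣ k := Nat.minFac_dvd k
  have hdpn : d * p ∣ n := by
    rw [hk]; exact mul_dvd_mul_left d hpk
  have hpn : p ∣ n := dvd_trans (Dvd.dvd.mul_left hpk d) (by rw [hk])
  have hpT : (p : ℝ) ≤ T ^ δ := hsmooth p hpp hpn
  -- d * p is a divisor, multiple of m; it must fail the size bound
  have hnotS : ¬ ((d * p : ℝ) ≤ T ^ ((1:ℝ)/6)) := by
    intro hle
    have : d * p ∈ S := by
      rw [hS, Finset.mem_filter, Nat.mem_divisors]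
      exact ⟨⟨hdpn, hn.ne'⟩, dvd_trans hmd (dvd_mul_right d p), by exact_mod_cast hle⟩
    have hle' := S.le_max' _ this
    rw [← hd] at hle'
    have : d < d * p := (Nat.lt_mul_iff_one_lt_right hd0).mpr hpp.one_lt
    omega
  push_neg at hnotS
  have hTδ0 : (0:ℝ) < T ^ δ := Real.rpow_pos_of_pos hT0 δ
  rw [Real.rpow_sub hT0]
  rw [div_le_iff₀ hTδ0]
  calc T ^ ((1:ℝ)/6) ≤ (d : ℝ) * (p : ℝ) := le_of_lt hnotS
    _ ≤ (d : ℝ) * T ^ δ := by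
        apply mul_le_mul_of_nonneg_left hpT (by positivity)

/-- Inductive decomposition: smooth `n ≤ T^{1/6} (T^{1/6-δ})^k` has a divisor `m ≤ T^{1/6}`
with `τ(n) ≤ τ(m)^{k+1}`. -/
private lemma decomp (T : ℝ) (hT : 1 ≤ T) (δ : ℝ) (hδ6 : δ ≤ (1:ℝ)/6) :
    ∀ k : ℕ, ∀ n : ℕ, 0 < n →
    (∀ p : ℕ, p.Prime → p ∣ n → (p : ℝ) ≤ T ^ δ) →
    (n : ℝ) ≤ T ^ ((1:ℝ)/6) * (T ^ ((1:ℝ)/6 - δ)) ^ k →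
    ∃ m : ℕ, m ∣ n ∧ (m : ℝ) ≤ T ^ ((1:ℝ)/6) ∧
      n.divisors.card ≤ m.divisors.card ^ (k + 1) := by
  have hT0 : (0:ℝ) < T := lt_of_lt_of_le one_pos hT
  intro k
  induction k with
  | zero =>
    intro n hn hsmooth hsize
    exact ⟨n, dvd_rfl, by simpa using hsize, by simp⟩
  | succ k ih =>
    intro n hn hsmooth hsize
    obtain ⟨a, -, han, ha6, hcase⟩ := stepA T hT δ n hn hsmooth 1 (one_dvd n)
      (by simpa using Real.one_le_rpow hT (by norm_num))
    rcases hcase with rfl | halow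
    · -- n itself is ≤ T^{1/6}
      refine ⟨a, dvd_rfl, ha6, ?_⟩
      have h1 : 1 ≤ a.divisors.card := by
        rw [Nat.one_le_iff_ne_zero, ← Nat.pos_iff_ne_zero, Finset.card_pos]
        exact ⟨a, Nat.mem_divisors.mpr ⟨dvd_rfl, hn.ne'⟩⟩
      exact le_self_pow₀ h1 (by omega)
    · -- a ≥ T^{1/6-δ}; recurse on n / a
      have ha0 : 0 < a := Nat.pos_of_dvd_of_pos han hn
      obtain ⟨b, hb⟩ := id han
      have hb0 : 0 < b := by
        rcases Nat.eq_zero_or_pos b with rfl | h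
        · rw [hb] at hn; simp at hn
        · exact h
      have hbsmooth : ∀ p : ℕ, p.Prime → p ∣ b → (p : ℝ) ≤ T ^ δ := by
        intro p hp hpb
        exact hsmooth p hp (dvd_trans hpb ⟨a, by rw [hb]; ring⟩)
      have hwpos : (0:ℝ) < T ^ ((1:ℝ)/6 - δ) := Real.rpow_pos_of_pos hT0 _
      have hbsize : (b : ℝ) ≤ T ^ ((1:ℝ)/6) * (T ^ ((1:ℝ)/6 - δ)) ^ k := by
        have hab : (a:ℝ) * (b:ℝ) ≤ (T ^ ((1:ℝ)/6) * (T ^ ((1:ℝ)/6 - δ)) ^ k) * T ^ ((1:ℝ)/6 - δ) := by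
          calc (a:ℝ) * (b:ℝ) = (n:ℝ) := by rw [hb]; push_cast; ring
            _ ≤ T ^ ((1:ℝ)/6) * (T ^ ((1:ℝ)/6 - δ)) ^ (k+1) := hsize
            _ = (T ^ ((1:ℝ)/6) * (T ^ ((1:ℝ)/6 - δ)) ^ k) * T ^ ((1:ℝ)/6 - δ) := by ring
        have hb' : (b:ℝ) * T ^ ((1:ℝ)/6 - δ) ≤
            (T ^ ((1:ℝ)/6) * (T ^ ((1:ℝ)/6 - δ)) ^ k) * T ^ ((1:ℝ)/6 - δ) := by
          calc (b:ℝ) * T ^ ((1:ℝ)/6 - δ) ≤ (b:ℝ) * (a:ℝ) :=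
                mul_le_mul_of_nonneg_left halow (by positivity)
            _ = (a:ℝ) * (b:ℝ) := by ring
            _ ≤ _ := hab
        exact le_of_mul_le_mul_right hb' hwpos
      obtain ⟨m', hm'b, hm'6, hm'tau⟩ := ih b hb0 hbsmooth hbsize
      have hbn : b ∣ n := ⟨a, by rw [hb]; ring⟩
      have hm'n : m' ∣ n := dvd_trans hm'b hbn
      -- choose between a and m'
      have h1a : 1 ≤ a.divisors.card := by
        rw [Nat.one_le_iff_ne_zero, ← Nat.pos_iff_ne_zero, Finset.card_pos]
        exact ⟨a, Nat.mem_divisors.mpr ⟨dvd_rfl, ha0.ne'⟩⟩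
      have htau : n.divisors.card ≤ a.divisors.card * m'.divisors.card ^ (k+1) := by
        calc n.divisors.card = (a * b).divisors.card := by rw [hb]
          _ ≤ a.divisors.card * b.divisors.card := tau_mul_le' a b
          _ ≤ a.divisors.card * m'.divisors.card ^ (k+1) :=
              Nat.mul_le_mul_left _ hm'tau
      rcases le_total a.divisors.card m'.divisors.card with hle | hle
      · refine ⟨m', hm'n, hm'6, ?_⟩
        calc n.divisors.card ≤ a.divisors.card * m'.divisors.card ^ (k+1) := htau
          _ ≤ m'.divisors.card * m'.divisors.card ^ (k+1) := Nat.mul_le_mul_right _ hle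
          _ = m'.divisors.card ^ (k+2) := by ring
      · refine ⟨a, han, ha6, ?_⟩
        calc n.divisors.card ≤ a.divisors.card * m'.divisors.card ^ (k+1) := htau
          _ ≤ a.divisors.card * a.divisors.card ^ (k+1) :=
              Nat.mul_le_mul_left _ (Nat.pow_le_pow_left hle _)
          _ = a.divisors.card ^ (k+2) := by ring

/-- Let `T ≥ 1`, let `0 < δ ≤ 1/18`, and let `n` be a positive integer all of whose prime
divisors are at most `T^δ`, with `n ≤ T^{1/2}`. Then `n` has a positive divisor `d` with
`d ≤ T^{1/6}`, `min(n, T^{1/6−δ}) ≤ d`, and `τ(n) ≤ τ(d)⁴`. -/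
theorem smooth_divisor_with_many_divisors (T : ℝ) (hT : 1 ≤ T) (δ : ℝ) (hδ0 : 0 < δ)
    (hδ1 : δ ≤ 1 / 18) (n : ℕ) (hn : 0 < n)
    (hsmooth : ∀ p : ℕ, p.Prime → p ∣ n → (p : ℝ) ≤ T ^ δ)
    (hsize : (n : ℝ) ≤ T ^ ((1 : ℝ) / 2)) :
    ∃ d : ℕ, d ∣ n ∧ (d : ℝ) ≤ T ^ ((1 : ℝ) / 6) ∧
      min (n : ℝ) (T ^ ((1 : ℝ) / 6 - δ)) ≤ (d : ℝ) ∧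
      n.divisors.card ≤ d.divisors.card ^ 4 := by
  have hT0 : (0:ℝ) < T := lt_of_lt_of_le one_pos hT
  have hsize' : (n : ℝ) ≤ T ^ ((1:ℝ)/6) * (T ^ ((1:ℝ)/6 - δ)) ^ 3 := by
    have h3 : (T ^ ((1:ℝ)/6 - δ)) ^ 3 = T ^ (((1:ℝ)/6 - δ) * 3) := by
      rw [← Real.rpow_natCast (T ^ ((1:ℝ)/6 - δ)) 3, ← Real.rpow_mul hT0.le]
      norm_num
    rw [h3, ← Real.rpow_add hT0]
    calc (n : ℝ) ≤ T ^ ((1:ℝ)/2) := hsize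
      _ ≤ T ^ ((1:ℝ)/6 + ((1:ℝ)/6 - δ) * 3) :=
          Real.rpow_le_rpow_of_exponent_le hT (by linarith)
  obtain ⟨m, hmn, hm6, hmtau⟩ := decomp T hT δ (by linarith) 3 n hn hsmooth hsize'
  obtain ⟨d, hmd, hdn, hd6, hcase⟩ := stepA T hT δ n hn hsmooth m hmn hm6
  have hd0 : d ≠ 0 := by
    rintro rfl
    exact hn.ne' (Nat.eq_zero_of_zero_dvd hdn)
  refine ⟨d, hdn, hd6, ?_, ?_⟩
  · rcases hcase with rfl | hlow
    · exact min_le_left _ _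
    · exact le_trans (min_le_right _ _) hlow
  · calc n.divisors.card ≤ m.divisors.card ^ 4 := hmtau
      _ ≤ d.divisors.card ^ 4 :=
        Nat.pow_le_pow_left (Finset.card_le_card (Nat.divisors_subset_of_dvd hd0 hmd)) _
end
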